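/- Let N be a topological group and f₁, f₂, g₁, g₂ : M → N continuous maps. If (f₁ · f₂⁻¹, const_1) is homotopic (as a pair) to (g₁, g₂), then (f₁, f₂) is homotopic to (g₁ · f₂, g₂ · f₂), and the coincidence sets satisfy C(g₁ · f₂, g₂ · f₂) = C(g₁, g₂). Consequently MCC(f₁, f₂) ≤ MCC(f₁ · f₂⁻¹, const_1). -/

import Mathlib

open ContinuousMap

/-- Coincidence set of two continuous maps. -/
def coin {M N : Type*} [TopologicalSpace M] [TopologicalSpace N] (u v : C(M, N)) :
    Set M := {x | u x = v x}

/-- Minimum number of path components of the coincidence set over the homotopy classes. -/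
noncomputable def MCC {M N : Type*} [TopologicalSpace M] [TopologicalSpace N]
    (f₁ f₂ : C(M, N)) : ℕ :=
  sInf {n : ℕ | ∃ g₁ g₂ : C(M, N), g₁.Homotopic f₁ ∧ g₂.Homotopic f₂ ∧
    Nat.card (ZerothHomotopy (coin g₁ g₂)) = n}

section

variable {M N : Type*} [TopologicalSpace M] [TopologicalSpace N]

theorem ContinuousMap.Homotopic.mul [Mul N] [ContinuousMul N] {u u' v v' : C(M, N)}
    (hu : u.Homotopic u') (hv : v.Homotopic v') : (u * v).Homotopic (u' * v') :=
  (Homotopic.refl ⟨fun p : N × N => p.1 * p.2, continuous_mul⟩).comp (hu.prodMk hv)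

theorem coin_mul_right [Mul N] [ContinuousMul N] [IsRightCancelMul N] (u v w : C(M, N)) :
    coin (u * w) (v * w) = coin u v := by
  ext x
  exact mul_right_cancel_iff

theorem MCC_mul_right_le [Mul N] [ContinuousMul N] [IsRightCancelMul N] (u v w : C(M, N)) :
    MCC (u * w) (v * w) ≤ MCC u v := by
  refine csInf_le_csInf (OrderBot.bddBelow _) ⟨_, u, v, .refl u, .refl v, rfl⟩ ?_
  rintro n ⟨g₁, g₂, hg₁, hg₂, rfl⟩
  exact ⟨g₁ * w, g₂ * w, hg₁.mul (.refl w), hg₂.mul (.refl w), by rw [coin_mul_right]⟩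

end

theorem mcc_le_of_group_general {M N : Type*} [TopologicalSpace M]
    [TopologicalSpace N] [Group N] [IsTopologicalGroup N]
    (f₁ f₂ g₁ g₂ : C(M, N))
    (h₁ : (f₁ * f₂⁻¹).Homotopic g₁)
    (h₂ : (ContinuousMap.const M (1 : N)).Homotopic g₂) :
    f₁.Homotopic (g₁ * f₂) ∧ f₂.Homotopic (g₂ * f₂) ∧
    coin (g₁ * f₂) (g₂ * f₂) = coin g₁ g₂ ∧
    MCC f₁ f₂ ≤ MCC (f₁ * f₂⁻¹) (ContinuousMap.const M (1 : N)) := by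
  have hf₁ : f₁ * f₂⁻¹ * f₂ = f₁ := inv_mul_cancel_right f₁ f₂
  have hf₂ : ContinuousMap.const M (1 : N) * f₂ = f₂ := one_mul f₂
  refine ⟨?_, ?_, coin_mul_right g₁ g₂ f₂, ?_⟩
  · simpa only [hf₁] using h₁.mul (.refl f₂)
  · simpa only [hf₂] using h₂.mul (.refl f₂)
  · simpa only [hf₁, hf₂] using MCC_mul_right_le (f₁ * f₂⁻¹) (.const M 1) f₂

/-- If `(f₁·f₂⁻¹, 1)` is homotopic as a pair to `(g₁, g₂)` then `(f₁, f₂)` is homotopic to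
`(g₁·f₂, g₂·f₂)`, whose coincidence set equals that of `(g₁, g₂)`; consequently
`MCC(f₁,f₂) ≤ MCC(f₁·f₂⁻¹, const 1)`. -/
theorem mcc_le_of_group {M N : Type*} [TopologicalSpace M] [CompactSpace M]
    [TopologicalSpace N] [Group N] [IsTopologicalGroup N]
    (f₁ f₂ g₁ g₂ : C(M, N))
    (h₁ : (f₁ * f₂⁻¹).Homotopic g₁)
    (h₂ : (ContinuousMap.const M (1 : N)).Homotopic g₂) :
    f₁.Homotopic (g₁ * f₂) ∧ f₂.Homotopic (g₂ * f₂) ∧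
    coin (g₁ * f₂) (g₂ * f₂) = coin g₁ g₂ ∧
    MCC f₁ f₂ ≤ MCC (f₁ * f₂⁻¹) (ContinuousMap.const M (1 : N)) :=
  mcc_le_of_group_general f₁ f₂ g₁ g₂ h₁ h₂
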